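/- Let η_d ∈ (0,1], y, z, η_f ∈ [0,1]. For every integer l ≥ 1, (1-(1-yη_f)(1-z)η_d)^l - (1-η_d)^l ≤ 1-(1-y)(1-z). In particular, max over l ≥ 1 of the left-hand side is at most the lossless cheating probability 1-(1-y)(1-z). -/
import Mathlib


/-- Losses cannot help dishonest Alice: for η_d ∈ (0,1], y, z, η_f ∈ [0,1] and
every l ≥ 1, (1-(1-yη_f)(1-z)η_d)^l - (1-η_d)^l ≤ 1-(1-y)(1-z). -/
theorem stmt_9 (ηd y z ηf : ℝ) (hηd : ηd ∈ Set.Ioc (0:ℝ) 1)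
    (hy : y ∈ Set.Icc (0:ℝ) 1) (hz : z ∈ Set.Icc (0:ℝ) 1)
    (hηf : ηf ∈ Set.Icc (0:ℝ) 1) :
    ∀ l : ℕ, 1 ≤ l →
      (1 - (1 - y*ηf)*(1-z)*ηd)^l - (1 - ηd)^l ≤ 1 - (1-y)*(1-z) := by
  obtain ⟨hd0, hd1⟩ := hηd
  obtain ⟨hy0, hy1⟩ := hy
  obtain ⟨hz0, hz1⟩ := hz
  obtain ⟨hf0, hf1⟩ := hηf
  intro l hl
  set c : ℝ := (1 - y*ηf)*(1-z) with hc
  have hyf : y*ηf ≤ y := by nlinarith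
  have hc0 : 0 ≤ c := by nlinarith
  have hc1 : c ≤ 1 := by nlinarith
  have hb0 : (0:ℝ) ≤ 1 - ηd := by linarith
  have hb1 : (1:ℝ) - ηd ≤ 1 := by linarith
  have key := (convexOn_pow l).2 (Set.mem_Ici.2 (by norm_num : (0:ℝ) ≤ 1))
    (Set.mem_Ici.2 hb0) (by linarith : 0 ≤ 1 - c) hc0 (by ring)
  simp only [smul_eq_mul] at key
  have key' : (1 - c*ηd)^l ≤ (1-c) + c*(1-ηd)^l := by
    have h1 : (1-c) * 1 + c * (1-ηd) = 1 - c*ηd := by ring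
    rw [h1] at key
    simpa using key
  have hbl0 : 0 ≤ (1-ηd)^l := pow_nonneg hb0 l
  have hbl1 : (1-ηd)^l ≤ 1 := pow_le_one₀ hb0 hb1
  have hcge : (1-y)*(1-z) ≤ c := by nlinarith
  have harr : (1 - (1 - y*ηf)*(1-z)*ηd) = 1 - c*ηd := by rw [hc]
  rw [harr]
  nlinarith [mul_nonneg hc0 hbl0]
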